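/- arXiv:math/0404240 — 4 statements merged into one kernel-verified Lean document; each statement's English description precedes it below -/
import Mathlib

section
/- Let μ ≤ λ be infinite cardinals such that the pair (λ,μ) is ℵ0-compact, and let c_n : [λ]^{<ℵ0} → μ for n < ω. Then there exists c : [λ]^{<ℵ0} → μ such that ID(c) ⊆ ⋂_{n<ω} ID(c_n). -/
open FirstOrder Cardinal

/-- An identity `(n, e)`: `e` is an equivalence relation on the finite subsets of
`{0, …, n-1}` relating only sets of equal size. -/
def IsIdentity {n : ℕ} (e : Finset (Fin n) → Finset (Fin n) → Prop) : Prop :=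
  Equivalence e ∧ ∀ b c, e b c → b.card = c.card

/-- `(n,e) ∈ ID(f)`: there is an injection `h` of `{0, …, n-1}` such that
`e`-related sets get equal `f`-colors. -/
def RealizesId {α β : Type*} (f : Finset α → β) {n : ℕ}
    (e : Finset (Fin n) → Finset (Fin n) → Prop) : Prop :=
  ∃ h : Fin n ↪ α, ∀ b c : Finset (Fin n), e b c → f (b.map h) = f (c.map h)

/-- `M ∈ K_{(λ,μ)}`. -/
def InK (L : FirstOrder.Language.{0, 0}) (P : L.Relations 1) (lam mu : Cardinal.{0})
    (M : Type) [L.Structure M] : Prop :=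
  #M = lam ∧ #{a : M // Language.Structure.RelMap P ![a]} = mu

/-- `M` is a model of the theory `T`. -/
def ModelsTheory (L : FirstOrder.Language.{0, 0}) (T : L.Theory) (M : Type)
    [L.Structure M] : Prop :=
  ∀ φ ∈ T, M ⊨ φ

/-- The pair `(λ, μ)` is `ℵ₀`-compact: for every countable vocabulary with a
distinguished unary predicate `P` and every countable theory `T`, if every finite subset
of `T` has a model in `K_{(λ,μ)}` then so does `T`. -/
def IsAleph0Compact (lam mu : Cardinal.{0}) : Prop :=
  ∀ (L : FirstOrder.Language.{0, 0}) (P : L.Relations 1), L.card ≤ ℵ₀ →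
    ∀ T : L.Theory, T.Countable →
      (∀ T₀ : L.Theory, T₀ ⊆ T → T₀.Finite →
        ∃ (M : Type) (S : L.Structure M), @ModelsTheory L T₀ M S ∧ @InK L P lam mu M S) →
      ∃ (M : Type) (S : L.Structure M), @ModelsTheory L T M S ∧ @InK L P lam mu M S

namespace Cpt

def Rels : ℕ → Type
  | 1 => Unit
  | _ => Empty

def L0 : Language := ⟨fun _ => Unit, Rels⟩

def P0 : L0.Relations 1 := Unit.unit

instance instCR (n : ℕ) : Countable (L0.Relations n) :=
  match n with
  | 0 => (inferInstance : Countable Empty)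
  | 1 => (inferInstance : Countable Unit)
  | (_+2) => (inferInstance : Countable Empty)

instance instCF (n : ℕ) : Countable (L0.Functions n) := (inferInstance : Countable Unit)

instance : Countable L0.Symbols := by
  unfold Language.Symbols
  infer_instance

theorem L0_card : L0.card ≤ ℵ₀ := Cardinal.mk_le_aleph0

open Language Structure

/-- Term `F(x_{b(0)},…,x_{b(m-1)})` listing the elements of `b` in increasing order. -/
def enumTerm {n : ℕ} (b : Finset (Fin n)) : L0.Term (Empty ⊕ Fin n) :=
  Term.func (l := b.card) Unit.unit
    (fun i => Term.var (Sum.inr ((b.orderIsoOfFin rfl i : Fin n))))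

/-- Symmetry sentence: `∀ x, F(x) = F(x ∘ σ)`. -/
def symSen (m : ℕ) (σ : Equiv.Perm (Fin m)) : L0.Sentence :=
  (Term.bdEqual
    (Term.func (l := m) Unit.unit (fun i => Term.var (Sum.inr i)))
    (Term.func (l := m) Unit.unit (fun i => Term.var (Sum.inr (σ i))))).alls

/-- `∀ x, P (F x)`. -/
def pSen (m : ℕ) : L0.Sentence :=
  (P0.boundedFormula
    ![Term.func (l := m) Unit.unit (fun i => Term.var (Sum.inr i))]).alls

open Classical in
/-- Sentence saying that the identity `(n,e)` is not realized by `F`. -/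
noncomputable def idSen (n : ℕ) (e : Finset (Fin n) → Finset (Fin n) → Prop) : L0.Sentence :=
  ((BoundedFormula.iSup
      (fun p : {p : Fin n × Fin n // p.1 ≠ p.2} => Term.bdEqual (Term.var (Sum.inr p.1.1)) (Term.var (Sum.inr p.1.2)))) ⊔
   (BoundedFormula.iSup
      (fun p : {p : Finset (Fin n) × Finset (Fin n) // e p.1 p.2} => (Term.bdEqual (enumTerm p.1.1) (enumTerm p.1.2)).not))).alls

variable {M : Type} [L0.Structure M]

/-- Application `F(x_{b(0)},…)`. -/
noncomputable def enumApp {n : ℕ} (b : Finset (Fin n)) (x : Fin n → M) : M :=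
  funMap (L := L0) (n := b.card) Unit.unit (fun i => x (b.orderIsoOfFin rfl i))

theorem realize_symSen (m : ℕ) (σ : Equiv.Perm (Fin m)) :
    M ⊨ symSen m σ ↔ ∀ x : Fin m → M,
      funMap (L := L0) Unit.unit x = funMap (L := L0) Unit.unit (fun i => x (σ i)) := by
  simp [symSen, Sentence.Realize, BoundedFormula.realize_alls,
    BoundedFormula.realize_bdEqual, Term.realize_func, Term.realize_var]
  exact Iff.rfl

theorem realize_pSen (m : ℕ) :
    M ⊨ pSen m ↔ ∀ x : Fin m → M,
      RelMap (L := L0) P0 ![funMap (L := L0) Unit.unit x] := by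
  simp only [pSen, Sentence.Realize, BoundedFormula.realize_alls,
    BoundedFormula.realize_rel, Term.realize_func, Term.realize_var]
  refine forall_congr' fun x => iff_of_eq (congrArg _ ?_)
  funext i
  fin_cases i
  simp [Term.realize]

theorem realize_enumTerm {n : ℕ} (b : Finset (Fin n)) (x : Fin n → M) (v : Empty → M) :
    (enumTerm b).realize (Sum.elim v x) = enumApp b x := by
  simp [enumTerm, enumApp, Term.realize]

theorem realize_idSen (n : ℕ) (e : Finset (Fin n) → Finset (Fin n) → Prop) :
    M ⊨ idSen n e ↔ ∀ x : Fin n → M, Function.Injective x →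
      ∃ b c : Finset (Fin n), e b c ∧ enumApp b x ≠ enumApp c x := by
  simp only [idSen, Sentence.Realize, BoundedFormula.realize_alls,
    BoundedFormula.realize_sup, BoundedFormula.realize_iSup, Finset.mem_filter,
    Finset.mem_univ, true_and, BoundedFormula.realize_not, BoundedFormula.realize_bdEqual,
    Term.realize_var, Sum.elim_inr, realize_enumTerm, Prod.exists,
    Subtype.exists, exists_prop]
  constructor
  · intro h x hx
    rcases h x with (⟨i, j, hij, heq⟩ | ⟨b, c, hbc, hne⟩)
    · exact absurd (hx heq) hij
    · exact ⟨b, c, hbc, hne⟩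
  · intro h x
    by_cases hx : Function.Injective x
    · rcases h x hx with ⟨b, c, hbc, hne⟩
      exact Or.inr ⟨b, c, hbc, hne⟩
    · rw [Function.not_injective_iff] at hx
      rcases hx with ⟨i, j, heq, hij⟩
      exact Or.inl ⟨i, j, hij, heq⟩


section Sym

variable {M : Type} [L0.Structure M]

theorem funMap_cast {m m' : ℕ} (h : m' = m) (x : Fin m → M) :
    funMap (L := L0) (n := m) Unit.unit x
      = funMap (L := L0) (n := m') Unit.unit (x ∘ Fin.cast h) := by
  subst h; rfl

theorem exists_perm {m : ℕ} (x y : Fin m → M) (hx : Function.Injective x)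
    (hy : Function.Injective y) (h : Set.range x = Set.range y) :
    ∃ σ : Equiv.Perm (Fin m), x = y ∘ σ := by
  refine ⟨(Equiv.ofInjective x hx).trans ((Equiv.setCongr h).trans
    (Equiv.ofInjective y hy).symm), ?_⟩
  funext i
  simp [Equiv.apply_ofInjective_symm]

theorem funMap_congr (hsym : ∀ (m : ℕ) (σ : Equiv.Perm (Fin m)), M ⊨ symSen m σ)
    {m : ℕ} (x y : Fin m → M) (hx : Function.Injective x) (hy : Function.Injective y)
    (h : Set.range x = Set.range y) :
    funMap (L := L0) Unit.unit x = funMap (L := L0) Unit.unit y := by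
  obtain ⟨σ, hσ⟩ := exists_perm x y hx hy h
  have := (realize_symSen (M := M) m σ).1 (hsym m σ) y
  rw [hσ]
  convert this.symm using 2
  rfl

/-- The canonical coloring extracted from a model: apply `F` to an enumeration of `s`. -/
noncomputable def setFun (s : Finset M) : M :=
  funMap (L := L0) (n := s.card) Unit.unit
    (fun i => s.toList.get (Fin.cast s.length_toList.symm i))

theorem setFun_enum_injective (s : Finset M) :
    Function.Injective (fun i : Fin s.card => s.toList.get (Fin.cast s.length_toList.symm i)) := by
  intro i j hij
  have := List.nodup_iff_injective_get.1 s.nodup_toList hij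
  simpa [Fin.ext_iff] using this

theorem setFun_enum_range (s : Finset M) :
    Set.range (fun i : Fin s.card => s.toList.get (Fin.cast s.length_toList.symm i)) = ↑s := by
  ext a
  constructor
  · rintro ⟨i, rfl⟩
    exact Finset.mem_toList.1 (List.get_mem _ _)
  · intro ha
    have : a ∈ s.toList := (Finset.mem_toList).2 ha
    obtain ⟨i, hi⟩ := List.mem_iff_get.1 this
    exact ⟨Fin.cast s.length_toList i, by simpa using hi⟩

theorem funMap_eq_setFun (hsym : ∀ (m : ℕ) (σ : Equiv.Perm (Fin m)), M ⊨ symSen m σ)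
    {m : ℕ} (x : Fin m → M) (hx : Function.Injective x) (s : Finset M)
    (hs : Set.range x = ↑s) (hm : m = s.card) :
    funMap (L := L0) Unit.unit x = setFun s := by
  rw [setFun, funMap_cast (M := M) hm (fun i => s.toList.get (Fin.cast s.length_toList.symm i))]
  exact funMap_congr hsym _ _ hx ((setFun_enum_injective s).comp (Fin.cast_injective _))
    (by rw [hs, Function.Surjective.range_comp (f := Fin.cast hm) (fun j => ⟨Fin.cast hm.symm j, rfl⟩) _, setFun_enum_range])

end Sym


section Theory

variable (lam mu : Cardinal.{0}) (c : ℕ → Finset (Quotient.out lam) → Quotient.out mu)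

def TSym : L0.Theory := Set.range (fun p : Σ m : ℕ, Equiv.Perm (Fin m) => symSen p.1 p.2)

def TP : L0.Theory := Set.range pSen

noncomputable def TId : L0.Theory :=
  ⋃ n : ℕ, (fun e => idSen n e) '' {e | ∃ k, ¬ RealizesId (c k) e}

noncomputable def TT : L0.Theory := (TSym ∪ TP) ∪ TId lam mu c

theorem TT_countable : (TT lam mu c).Countable := by
  refine (Set.Countable.union (Set.Countable.union ?_ ?_) ?_)
  · exact Set.countable_range _
  · exact Set.countable_range _
  · exact Set.countable_iUnion fun n => (Set.to_countable _).image _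

open Classical in
/-- The structure on `lam.out` induced by a coloring `d` and an embedding of `mu.out`. -/
noncomputable def Str (d : Finset (Quotient.out lam) → Quotient.out mu)
    (ι : Quotient.out mu ↪ Quotient.out lam) : L0.Structure (Quotient.out lam) where
  funMap {m} _ x := ι (d (Finset.image x Finset.univ))
  RelMap {m} r x :=
    match m, r with
    | 1, _ => x 0 ∈ Set.range ι
    | 0, r => r.elim
    | (_+2), r => r.elim

open Classical in
theorem image_enum {n : ℕ} {β : Type*} (b : Finset (Fin n)) (x : Fin n → β) :
    Finset.image (fun i => x ((b.orderIsoOfFin rfl i : Fin n))) Finset.univ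
      = Finset.image x b := by
  ext a
  simp only [Finset.mem_image, Finset.mem_univ, true_and]
  constructor
  · rintro ⟨i, rfl⟩
    exact ⟨b.orderIsoOfFin rfl i, (b.orderIsoOfFin rfl i).2, rfl⟩
  · rintro ⟨j, hj, rfl⟩
    exact ⟨(b.orderIsoOfFin rfl).symm ⟨j, hj⟩, by simp⟩

variable (d : Finset (Quotient.out lam) → Quotient.out mu)
    (ι : Quotient.out mu ↪ Quotient.out lam)

open Classical in
theorem str_enumApp {n : ℕ} (b : Finset (Fin n)) (x : Fin n → Quotient.out lam) :
    @enumApp (Quotient.out lam) (Str lam mu d ι) n b x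
      = ι (d (Finset.image x b)) := by
  show ι (d (Finset.image (fun i => x ((b.orderIsoOfFin rfl i : Fin n))) Finset.univ))
      = ι (d (Finset.image x b))
  rw [image_enum]


open Classical in
theorem str_funMap {m : ℕ} (x : Fin m → Quotient.out lam) :
    @funMap L0 (Quotient.out lam) (Str lam mu d ι) m Unit.unit x
      = ι (d (Finset.image x Finset.univ)) := rfl

theorem str_relMap (a : Quotient.out lam) :
    @RelMap L0 (Quotient.out lam) (Str lam mu d ι) 1 P0 ![a] ↔ a ∈ Set.range ι :=
  Iff.rfl

theorem str_inK : @InK L0 P0 lam mu (Quotient.out lam) (Str lam mu d ι) := by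
  constructor
  · exact mk_out lam
  · have e : {a : Quotient.out lam // @RelMap L0 _ (Str lam mu d ι) 1 P0 ![a]}
        ≃ Set.range ι := Equiv.subtypeEquivRight fun a => str_relMap lam mu d ι a
    rw [mk_congr e, Cardinal.mk_range_eq _ ι.injective, mk_out]

theorem str_models_symSen (m : ℕ) (σ : Equiv.Perm (Fin m)) :
    @Sentence.Realize L0 (Quotient.out lam) (Str lam mu d ι) (symSen m σ) := by
  classical
  letI : L0.Structure (Quotient.out lam) := Str lam mu d ι
  rw [realize_symSen]
  intro x
  rw [str_funMap, str_funMap]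
  have himg : Finset.image (fun i => x (σ i)) Finset.univ = Finset.image x Finset.univ := by
    ext a
    simp only [Finset.mem_image, Finset.mem_univ, true_and]
    exact ⟨fun ⟨i, hi⟩ => ⟨σ i, hi⟩, fun ⟨j, hj⟩ => ⟨σ.symm j, by simpa using hj⟩⟩
  rw [himg]

theorem str_models_pSen (m : ℕ) :
    @Sentence.Realize L0 (Quotient.out lam) (Str lam mu d ι) (pSen m) := by
  letI : L0.Structure (Quotient.out lam) := Str lam mu d ι
  rw [realize_pSen]
  intro x
  rw [str_funMap, str_relMap]
  exact ⟨_, rfl⟩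

theorem str_models_idSen {n : ℕ} (e : Finset (Fin n) → Finset (Fin n) → Prop) (k : ℕ)
    (hk : ¬ RealizesId (c k) e)
    (hdk : ∀ s t : Finset (Quotient.out lam), d s = d t → c k s = c k t) :
    @Sentence.Realize L0 (Quotient.out lam) (Str lam mu d ι) (idSen n e) := by
  classical
  letI : L0.Structure (Quotient.out lam) := Str lam mu d ι
  rw [realize_idSen]
  intro x hx
  by_contra hcon
  push_neg at hcon
  apply hk
  refine ⟨⟨x, hx⟩, fun b b' hbb' => ?_⟩
  have := hcon b b' hbb'
  rw [str_enumApp, str_enumApp] at this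
  have hd : d (Finset.image x b) = d (Finset.image x b') := ι.injective this
  have := hdk _ _ hd
  rwa [Finset.map_eq_image, Finset.map_eq_image]

end Theory


end Cpt

open Cpt Language Structure

/-- Claim 1.4(1): if `(λ,μ)` is `ℵ₀`-compact and `c_n : [λ]^{<ℵ₀} → μ` for `n < ω`,
then there is `c : [λ]^{<ℵ₀} → μ` with `ID(c) ⊆ ⋂_n ID(c_n)`. -/
theorem exists_coloring_of_aleph0Compact (lam mu : Cardinal.{0})
    (hmu : ℵ₀ ≤ mu) (hml : mu ≤ lam) (hcpt : IsAleph0Compact lam mu)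
    (c : ℕ → Finset (Quotient.out lam) → Quotient.out mu) :
    ∃ c' : Finset (Quotient.out lam) → Quotient.out mu,
      ∀ (n : ℕ) (e : Finset (Fin n) → Finset (Fin n) → Prop),
        IsIdentity e → RealizesId c' e → ∀ k : ℕ, RealizesId (c k) e := by
  classical
  -- an embedding of mu.out into lam.out
  have hle : #(Quotient.out mu) ≤ #(Quotient.out lam) := by rwa [mk_out, mk_out]
  obtain ⟨ι⟩ := (Cardinal.le_def _ _).mp hle
  -- choice of data for members of TId
  have hch : ∀ φ ∈ TId lam mu c, ∃ q : Σ n : ℕ, (Finset (Fin n) → Finset (Fin n) → Prop) × ℕ,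
      φ = idSen q.1 q.2.1 ∧ ¬ RealizesId (c q.2.2) q.2.1 := by
    intro φ hφ
    rw [TId, Set.mem_iUnion] at hφ
    obtain ⟨n, e, ⟨k, hk⟩, rfl⟩ := hφ
    exact ⟨⟨n, e, k⟩, rfl, hk⟩
  choose W hW1 hW2 using hch
  -- finite satisfiability
  have hfinsat : ∀ T₀ : L0.Theory, T₀ ⊆ TT lam mu c → T₀.Finite →
      ∃ (M : Type) (S : L0.Structure M), @ModelsTheory L0 T₀ M S ∧ @InK L0 P0 lam mu M S := by
    intro T₀ hsub hfin
    have hA : (T₀ ∩ TId lam mu c).Finite := hfin.subset Set.inter_subset_left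
    set K : Finset ℕ :=
      hA.toFinset.attach.image
        (fun φ => (W φ.1 (hA.mem_toFinset.mp φ.2).2).2.2) with hK
    have hcard : #(↥K → Quotient.out mu) ≤ #(Quotient.out mu) := by
      rw [← Cardinal.power_def, Cardinal.mk_coe_finset, mk_out]
      exact Cardinal.power_nat_le hmu
    obtain ⟨p⟩ := (Cardinal.le_def _ _).mp hcard
    set d : Finset (Quotient.out lam) → Quotient.out mu :=
      fun s => p (fun k => c k.1 s) with hd
    have hdk : ∀ k ∈ K, ∀ s t : Finset (Quotient.out lam), d s = d t → c k s = c k t := by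
      intro k hk s t hst
      have := congrFun (p.injective hst) ⟨k, hk⟩
      exact this
    refine ⟨Quotient.out lam, Str lam mu d ι, ?_, str_inK lam mu d ι⟩
    intro φ hφ
    rcases hsub hφ with ((hs | hp) | hid)
    · obtain ⟨⟨m, σ⟩, rfl⟩ := hs
      exact str_models_symSen lam mu d ι m σ
    · obtain ⟨m, rfl⟩ := hp
      exact str_models_pSen lam mu d ι m
    · have hmem : φ ∈ T₀ ∩ TId lam mu c := ⟨hφ, hid⟩
      have hkK : (W φ hid).2.2 ∈ K := by
        rw [hK]
        refine Finset.mem_image.mpr ⟨⟨φ, hA.mem_toFinset.mpr hmem⟩, Finset.mem_attach _ _, rfl⟩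
      rw [hW1 φ hid]
      exact str_models_idSen lam mu c d ι _ _ (hW2 φ hid) (hdk _ hkK)
  -- apply compactness
  obtain ⟨M, S, hmod, hink⟩ := hcpt L0 P0 L0_card (TT lam mu c) (TT_countable lam mu c) hfinsat
  -- extract the coloring from the model
  letI : L0.Structure M := S
  have hsym : ∀ (m : ℕ) (σ : Equiv.Perm (Fin m)), M ⊨ symSen m σ :=
    fun m σ => hmod _ (Or.inl (Or.inl ⟨⟨m, σ⟩, rfl⟩))
  have hP : ∀ m : ℕ, M ⊨ pSen m := fun m => hmod _ (Or.inl (Or.inr ⟨m, rfl⟩))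
  have hsetP : ∀ t : Finset M, RelMap (L := L0) P0 ![setFun t] :=
    fun t => (realize_pSen _).1 (hP _) _
  obtain ⟨g⟩ : Nonempty (M ≃ Quotient.out lam) := by
    rw [← Cardinal.eq, mk_out, hink.1]
  obtain ⟨ψ⟩ : Nonempty ({a : M // RelMap (L := L0) P0 ![a]} ≃ Quotient.out mu) := by
    rw [← Cardinal.eq, mk_out]
    exact hink.2
  refine ⟨fun s => ψ ⟨setFun (s.map g.symm.toEmbedding), hsetP _⟩, ?_⟩
  intro n e _hid hre k
  by_contra hk
  have hmem : idSen n e ∈ TT lam mu c :=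
    Or.inr (Set.mem_iUnion.mpr ⟨n, Set.mem_image_of_mem _ ⟨k, hk⟩⟩)
  have hMid := (realize_idSen n e).mp (hmod _ hmem)
  obtain ⟨h, hh⟩ := hre
  set x : Fin n → M := fun i => g.symm (h i) with hxdef
  have hx : Function.Injective x := fun i j hij => h.injective (g.symm.injective hij)
  obtain ⟨b, b', hbb', hne⟩ := hMid x hx
  apply hne
  have key : ∀ b : Finset (Fin n),
      enumApp b x = setFun ((b.map h).map g.symm.toEmbedding) := by
    intro b
    apply funMap_eq_setFun hsym
    · intro i j hij
      exact (b.orderIsoOfFin rfl).injective (Subtype.ext (hx hij))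
    · have h1 : Set.range (fun i => x ((b.orderIsoOfFin rfl i : Fin n)))
          = ↑(Finset.image (fun i => x ((b.orderIsoOfFin rfl i : Fin n))) Finset.univ) := by
        ext a; simp
      rw [h1, image_enum]
      ext a
      simp only [Finset.coe_image, Set.mem_image, Finset.mem_coe, Finset.coe_map,
        Finset.map_map, Function.Embedding.trans_apply, Function.Embedding.coe_subtype,
        Equiv.coe_toEmbedding, Function.Embedding.coeFn_mk, Finset.mem_image,
        Finset.mem_map, hxdef]
    · rw [Finset.card_map, Finset.card_map]
  have hcc := hh b b' hbb'
  have : setFun ((b.map h).map g.symm.toEmbedding)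
      = setFun ((b'.map h).map g.symm.toEmbedding) := by
    have := congrArg (fun z => (ψ.symm z).1) hcc
    simpa using this
  rw [key b, key b', this]
end

section
/- Let μ ≤ λ be infinite cardinals such that the pair (λ,μ) is ℵ0-compact, and let c_n : [λ]^2 → μ for n < ω. Then there exists c : [λ]^2 → μ such that ID_2(c) ⊆ ⋂_{n<ω} ID_2(c_n). -/
open FirstOrder Cardinal

/-- A 2-identity `(n, e)`: `e` is an equivalence relation on the 2-element subsets of
`{0, …, n-1}` (coded as non-diagonal elements of `Sym2 (Fin n)`). -/
def Is2Identity {n : ℕ} (e : Sym2 (Fin n) → Sym2 (Fin n) → Prop) : Prop :=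
  (∀ p, ¬ p.IsDiag → e p p) ∧ (∀ p q, e p q → e q p) ∧
    (∀ p q r, e p q → e q r → e p r) ∧ (∀ p q, e p q → ¬ p.IsDiag ∧ ¬ q.IsDiag)

/-- `(n,e) ∈ ID₂(f)` for a pair-coloring `f`: there is an injection `h` of
`{0, …, n-1}` such that `e`-related pairs get equal `f`-colors. -/
def Realizes2Id {α β : Type*} (f : Sym2 α → β) {n : ℕ}
    (e : Sym2 (Fin n) → Sym2 (Fin n) → Prop) : Prop :=
  ∃ h : Fin n ↪ α, ∀ p q : Sym2 (Fin n), e p q → f (p.map h) = f (q.map h)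

namespace Claim14

open Language

def LF : ℕ → Type := fun n => match n with | 2 => Unit | _ => Empty
def LR : ℕ → Type := fun n => match n with | 1 => Unit | _ => Empty
def L2 : FirstOrder.Language.{0,0} := ⟨LF, LR⟩
def fS : L2.Functions 2 := ()
def pS : L2.Relations 1 := ()

instance (n : ℕ) : Subsingleton (LF n) := by
  unfold LF; split
  · exact inferInstanceAs (Subsingleton Unit)
  · exact inferInstanceAs (Subsingleton Empty)

instance (n : ℕ) : Subsingleton (LR n) := by
  unfold LR; split
  · exact inferInstanceAs (Subsingleton Unit)
  · exact inferInstanceAs (Subsingleton Empty)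

instance : Countable (Σ n, L2.Functions n) :=
  ⟨⟨Sigma.fst, by
    rintro ⟨i, a⟩ ⟨j, b⟩ (h : i = j)
    subst h
    exact congrArg _ (@Subsingleton.elim (LF i) _ a b)⟩⟩

instance : Countable (Σ n, L2.Relations n) :=
  ⟨⟨Sigma.fst, by
    rintro ⟨i, a⟩ ⟨j, b⟩ (h : i = j)
    subst h
    exact congrArg _ (@Subsingleton.elim (LR i) _ a b)⟩⟩

instance : Countable L2.Sentence := by
  have h : Countable (Σ n, L2.BoundedFormula Empty n) := by
    rw [← Cardinal.mk_le_aleph0_iff]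
    refine BoundedFormula.card_le.trans ?_
    simp only [max_le_iff, le_refl, true_and]
    exact Cardinal.mk_le_aleph0
  exact Function.Injective.countable
    (f := fun φ : L2.Sentence => (⟨0, φ⟩ : Σ n, L2.BoundedFormula Empty n))
    (sigma_mk_injective (i := 0))

theorem L2card : L2.card ≤ ℵ₀ := by
  rw [Language.card, Language.Symbols]
  exact Cardinal.mk_le_aleph0

/-- the term f(x_i, x_j) -/
def ft {n : ℕ} (i j : Fin n) : L2.Term (Empty ⊕ Fin n) :=
  Term.func fS ![Term.var (Sum.inr i), Term.var (Sum.inr j)]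

/-- the binary interpretation of f -/
def fM (M : Type) [L2.Structure M] : M → M → M := fun a b => Structure.funMap fS ![a, b]

variable {M : Type} [L2.Structure M]

lemma realize_ft {n : ℕ} (w : Empty ⊕ Fin n → M) (i j : Fin n) :
    (ft i j).realize w = fM M (w (Sum.inr i)) (w (Sum.inr j)) := by
  simp only [ft, fM, Term.realize]
  congr 1
  funext k
  fin_cases k <;> rfl

noncomputable def distinctForm (n : ℕ) : L2.BoundedFormula Empty n :=
  BoundedFormula.iInf
    fun ij : (Finset.univ.filter fun ij : Fin n × Fin n => ij.1 ≠ ij.2) =>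
      ∼(Term.bdEqual (Term.var (Sum.inr ij.1.1)) (Term.var (Sum.inr ij.1.2)))

open Classical in
noncomputable def eqsForm (n : ℕ) (e : Sym2 (Fin n) → Sym2 (Fin n) → Prop) :
    L2.BoundedFormula Empty n :=
  BoundedFormula.iInf
    fun pq : (Finset.univ.filter fun pq : Sym2 (Fin n) × Sym2 (Fin n) => e pq.1 pq.2) =>
      Term.bdEqual (ft pq.1.1.out.1 pq.1.1.out.2) (ft pq.1.2.out.1 pq.1.2.out.2)

noncomputable def sigmaSent (n : ℕ) (e : Sym2 (Fin n) → Sym2 (Fin n) → Prop) : L2.Sentence :=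
  ∼((distinctForm n ⊓ eqsForm n e).exs)

def symAx : L2.Sentence :=
  (Term.bdEqual (ft (0 : Fin 2) 1) (ft (1 : Fin 2) 0)).alls

def inPAx : L2.Sentence :=
  (pS.boundedFormula ![ft (0 : Fin 2) 1]).alls

lemma realize_sigma_iff (n : ℕ) (e : Sym2 (Fin n) → Sym2 (Fin n) → Prop) :
    (M ⊨ sigmaSent n e) ↔
      ¬ ∃ xs : Fin n → M, Function.Injective xs ∧ ∀ p q : Sym2 (Fin n), e p q →
        fM M (xs p.out.1) (xs p.out.2) = fM M (xs q.out.1) (xs q.out.2) := by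
  classical
  rw [sigmaSent, Sentence.Realize, Formula.realize_not, BoundedFormula.realize_exs]
  apply not_congr
  constructor
  · rintro ⟨xs, hxs⟩
    rw [BoundedFormula.realize_inf] at hxs
    obtain ⟨h1, h2⟩ := hxs
    refine ⟨xs, ?_, ?_⟩
    · intro i j hij
      by_contra hne
      have := BoundedFormula.realize_iInf.mp h1 ⟨(i, j), by simp [hne]⟩
      rw [BoundedFormula.realize_not, BoundedFormula.realize_bdEqual] at this
      exact this hij
    · intro p q hpq
      have := BoundedFormula.realize_iInf.mp h2 ⟨(p, q), by simp [hpq]⟩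
      rw [BoundedFormula.realize_bdEqual, realize_ft, realize_ft] at this
      exact this
  · rintro ⟨xs, hinj, heq⟩
    refine ⟨xs, ?_⟩
    rw [BoundedFormula.realize_inf]
    constructor
    · rw [distinctForm, BoundedFormula.realize_iInf]
      rintro ⟨⟨i, j⟩, hij⟩
      rw [Finset.mem_filter] at hij
      rw [BoundedFormula.realize_not, BoundedFormula.realize_bdEqual]
      exact fun h => hij.2 (hinj h)
    · rw [eqsForm, BoundedFormula.realize_iInf]
      rintro ⟨⟨p, q⟩, hpq⟩
      rw [Finset.mem_filter] at hpq
      rw [BoundedFormula.realize_bdEqual, realize_ft, realize_ft]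
      exact heq p q hpq.2

lemma realize_symAx_iff : (M ⊨ symAx) ↔ ∀ x y : M, fM M x y = fM M y x := by
  rw [symAx, Sentence.Realize, BoundedFormula.realize_alls]
  constructor
  · intro h x y
    have := h ![x, y]
    rw [BoundedFormula.realize_bdEqual, realize_ft, realize_ft] at this
    exact this
  · intro h xs
    rw [BoundedFormula.realize_bdEqual, realize_ft, realize_ft]
    exact h _ _

lemma realize_inPAx_iff :
    (M ⊨ inPAx) ↔ ∀ x y : M, Structure.RelMap pS ![fM M x y] := by
  rw [inPAx, Sentence.Realize, BoundedFormula.realize_alls]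
  constructor
  · intro h x y
    have := h ![x, y]
    rw [BoundedFormula.realize_rel] at this
    convert this using 2
    rename_i k
    fin_cases k
    simp [realize_ft]
  · intro h xs
    rw [BoundedFormula.realize_rel]
    convert h (xs 0) (xs 1) using 2
    rename_i k
    fin_cases k
    simp [realize_ft]

lemma map_out {α β : Type*} (h : α → β) (p : Sym2 α) :
    p.map h = s(h p.out.1, h p.out.2) := by
  conv_lhs => rw [← p.out_eq]
  rfl

def mkStr {M : Type} (g : M → M → M) (p : M → Prop) : L2.Structure M where
  funMap {n} f v :=
    match n, f with
    | 2, _ => g (v 0) (v 1)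
    | 0, f => nomatch f
    | 1, f => nomatch f
    | (_+3), f => nomatch f
  RelMap {n} r v :=
    match n, r with
    | 1, _ => p (v 0)
    | 0, r => nomatch r
    | (_+2), r => nomatch r

end Claim14

open Claim14 in
/-- Claim 1.4(2): if `(λ,μ)` is `ℵ₀`-compact and `c_n : [λ]² → μ` for `n < ω`,
then there is `c : [λ]² → μ` with `ID₂(c) ⊆ ⋂_n ID₂(c_n)`. -/
theorem exists_pair_coloring_of_aleph0Compact (lam mu : Cardinal.{0})
    (hmu : ℵ₀ ≤ mu) (hml : mu ≤ lam) (hcpt : IsAleph0Compact lam mu)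
    (c : ℕ → Sym2 (Quotient.out lam) → Quotient.out mu) :
    ∃ c' : Sym2 (Quotient.out lam) → Quotient.out mu,
      ∀ (n : ℕ) (e : Sym2 (Fin n) → Sym2 (Fin n) → Prop),
        Is2Identity e → Realizes2Id c' e → ∀ k : ℕ, Realizes2Id (c k) e := by
  classical
  set T : L2.Theory := {symAx, inPAx} ∪
    {σ | ∃ (n : ℕ) (e : Sym2 (Fin n) → Sym2 (Fin n) → Prop),
      (∃ k, ¬ Realizes2Id (c k) e) ∧ σ = sigmaSent n e} with hTdef
  have hmain : ∃ (M : Type) (S : L2.Structure M),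
      @ModelsTheory L2 T M S ∧ @InK L2 pS lam mu M S := by
    refine hcpt L2 pS L2card T (Set.to_countable T) ?_
    intro T₀ hsub hfin
    -- choose a "bad k" for each sentence
    set Q : L2.Sentence → ℕ → Prop := fun φ k =>
      ∃ (n : ℕ) (e : Sym2 (Fin n) → Sym2 (Fin n) → Prop),
        ¬ Realizes2Id (c k) e ∧ φ = sigmaSent n e with hQdef
    set K : L2.Sentence → ℕ := fun φ => if h : ∃ k, Q φ k then h.choose else 0 with hKdef
    set m : ℕ := hfin.toFinset.sup K + 1 with hmdef
    obtain ⟨j⟩ : Nonempty (Quotient.out mu ↪ Quotient.out lam) :=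
      Cardinal.out_embedding.mp hml
    have hcard : #(Fin m → Quotient.out mu) ≤ #(Quotient.out mu) := by
      rw [← Cardinal.power_def, mk_out, Cardinal.mk_fin, Cardinal.power_natCast]
      exact Cardinal.power_nat_le hmu
    obtain ⟨code⟩ := (Cardinal.le_def _ _).mp hcard
    letI S0 : L2.Structure (Quotient.out lam) :=
      mkStr (fun a b => j (code fun i : Fin m => c i s(a, b))) (fun a => ∃ b, j b = a)
    refine ⟨Quotient.out lam, S0, ?_, mk_out lam, ?_⟩
    · intro φ hφ
      rcases hsub hφ with (rfl | rfl) | ⟨n, e, hex, rfl⟩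
      · rw [realize_symAx_iff]
        intro x y
        show j (code fun i : Fin m => c i s(x, y)) = j (code fun i : Fin m => c i s(y, x))
        rw [Sym2.eq_swap]
      · rw [realize_inPAx_iff]
        intro x y
        exact ⟨_, rfl⟩
      · -- the sigma sentences
        obtain ⟨k0, hk0⟩ := hex
        have hQ : ∃ k, Q (sigmaSent n e) k := ⟨k0, n, e, hk0, rfl⟩
        have hKeq : K (sigmaSent n e) = hQ.choose := dif_pos hQ
        obtain ⟨n', e', hk', heq'⟩ := hQ.choose_spec
        rw [heq']
        have hlt : K (sigmaSent n e) < m := by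
          rw [hmdef]
          exact Nat.lt_succ_of_le (Finset.le_sup (hfin.mem_toFinset.mpr hφ))
        rw [realize_sigma_iff]
        rintro ⟨xs, hinj, hxeq⟩
        apply hk'
        refine ⟨⟨xs, hinj⟩, ?_⟩
        intro p q hpq
        have h2 : j (code fun i : Fin m => c i s(xs p.out.1, xs p.out.2)) =
            j (code fun i : Fin m => c i s(xs q.out.1, xs q.out.2)) := hxeq p q hpq
        have h3 := code.injective (j.injective h2)
        have h4 := congrFun h3 ⟨K (sigmaSent n e), hlt⟩
        rw [map_out, map_out, ← hKeq]
        exact h4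
    · -- |P| = mu
      rw [← mk_out mu]
      exact (Cardinal.mk_range_eq j j.injective)
  obtain ⟨M, S, hMod, hc, hP⟩ := hmain
  letI := S
  have hsym : ∀ x y : M, fM M x y = fM M y x :=
    realize_symAx_iff.mp (hMod symAx (Or.inl (Or.inl rfl)))
  have hPv : ∀ x y : M, Language.Structure.RelMap pS ![fM M x y] :=
    realize_inPAx_iff.mp (hMod inPAx (Or.inl (Or.inr rfl)))
  obtain ⟨E⟩ : Nonempty (Quotient.out lam ≃ M) :=
    Cardinal.eq.mp (by rw [mk_out]; exact hc.symm)
  obtain ⟨B⟩ : Nonempty (Quotient.out mu ≃ {a : M // Language.Structure.RelMap pS ![a]}) :=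
    Cardinal.eq.mp (by rw [mk_out]; exact hP.symm)
  set dd : Sym2 (Quotient.out lam) → M :=
    Sym2.lift ⟨fun a b => fM M (E a) (E b), fun a b => hsym _ _⟩ with hdddef
  have hdd : ∀ s, Language.Structure.RelMap pS ![dd s] := by
    intro s
    induction s using Sym2.ind with
    | _ a b => simpa [hdddef] using hPv (E a) (E b)
  refine ⟨fun s => B.symm ⟨dd s, hdd s⟩, ?_⟩
  intro n e _ hre k
  by_contra hk
  have hσmem : sigmaSent n e ∈ T := Or.inr ⟨n, e, ⟨k, hk⟩, rfl⟩
  have hσ := (realize_sigma_iff n e).mp (hMod _ hσmem)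
  obtain ⟨h0, hh0⟩ := hre
  apply hσ
  refine ⟨fun i => E (h0 i), fun i j hij => h0.injective (E.injective hij), ?_⟩
  intro p q hpq
  have h1 := hh0 p q hpq
  have h2 : dd (Sym2.map (⇑h0) p) = dd (Sym2.map (⇑h0) q) :=
    congrArg Subtype.val (B.symm.injective h1)
  rw [map_out, map_out] at h2
  simpa [hdddef] using h2
end

section
/- Let μ1 ≤ λ1 and μ2 ≤ λ2 be infinite cardinals with (λ1,μ1) →'_{ℵ1} (λ2,μ2), and let c_n : [λ1]^{<ℵ0} → μ1 for n < ω. Then there exists c : [λ2]^{<ℵ0} → μ2 such that ID(c) ⊆ ⋂_{n<ω} ID(c_n). -/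
open FirstOrder Cardinal

/-- `(λ, μ) →'_{ℵ₁} (λ', μ')`. -/
def ArrowPrimeAleph1 (lam mu lam' mu' : Cardinal.{0}) : Prop :=
  ∀ (L : FirstOrder.Language.{0, 0}) (P : L.Relations 1), L.card ≤ ℵ₀ →
    ∀ T : L.Theory, T.Countable →
      (∀ T₀ : L.Theory, T₀ ⊆ T → T₀.Finite →
        ∃ (M : Type) (S : L.Structure M), @ModelsTheory L T₀ M S ∧ @InK L P lam mu M S) →
      ∃ (M : Type) (S : L.Structure M), @ModelsTheory L T M S ∧ @InK L P lam' mu' M S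

namespace Remark14
open FirstOrder Language
open scoped Classical

def Rels : ℕ → Type
  | 1 => PUnit
  | _ => PEmpty

def L : Language := ⟨fun _ => PUnit.{1}, Rels⟩

instance : ∀ n, Countable (Rels n)
  | 0 => inferInstanceAs (Countable PEmpty)
  | 1 => inferInstanceAs (Countable PUnit)
  | (_+2) => inferInstanceAs (Countable PEmpty)

def G (m : ℕ) : L.Functions m := (PUnit.unit : PUnit.{1})

def P : L.Relations 1 := (PUnit.unit : PUnit.{1})

instance : Countable L.Symbols :=
  inferInstanceAs (Countable ((Σ l, PUnit.{1}) ⊕ (Σ l, Rels l)))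

theorem Lcard : L.card ≤ ℵ₀ := Cardinal.mk_le_aleph0

variable {n : ℕ}

def tvar (i : Fin n) : L.Term (Empty ⊕ Fin n) := Term.var (Sum.inr i)

/-- term G_{b.card}(x_{b(0)},...,x_{b(last)}) -/
def gt (b : Finset (Fin n)) : L.Term (Empty ⊕ Fin n) :=
  Term.func (G b.card) (fun i => tvar ((b.orderIsoOfFin rfl i : Fin n)))

def gfull (n : ℕ) : L.Term (Empty ⊕ Fin n) :=
  Term.func (G n) (fun i => tvar i)

def axP (n : ℕ) : L.Sentence :=
  BoundedFormula.alls (Relations.boundedFormula₁ P (gfull n))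

def axSym (n : ℕ) (σ : Equiv.Perm (Fin n)) : L.Sentence :=
  BoundedFormula.alls
    (Term.bdEqual (gfull n) (Term.func (G n) (fun i => tvar (σ i))))

noncomputable def body (e : Finset (Fin n) → Finset (Fin n) → Prop) : L.BoundedFormula Empty n :=
  (BoundedFormula.iInf fun p : Fin n × Fin n =>
    if p.1 = p.2 then ⊤ else ((tvar p.1).bdEqual (tvar p.2)).not) ⊓
  (BoundedFormula.iInf fun p : Finset (Fin n) × Finset (Fin n) =>
    if e p.1 p.2 then (gt p.1).bdEqual (gt p.2) else ⊤)

noncomputable def phi (e : Finset (Fin n) → Finset (Fin n) → Prop) : L.Sentence :=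
  (BoundedFormula.exs (body e)).not


section Struct
variable {A : Type}

/-- structure determined by a coloring `D` and a predicate set `Q`. -/
noncomputable def cStruct (D : Finset A → A) (Q : Set A) : L.Structure A where
  funMap {l} _ x := D (Finset.image x Finset.univ)
  RelMap {l} r x :=
    match l, r with
    | 1, _ => x 0 ∈ Q

@[simp] theorem cStruct_rel (D : Finset A → A) (Q : Set A) (v : Fin 1 → A) :
    @Structure.RelMap L _ (cStruct D Q) 1 P v ↔ v 0 ∈ Q := Iff.rfl

@[simp] theorem cStruct_fun (D : Finset A → A) (Q : Set A) {l : ℕ}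
    (f : L.Functions l) (x : Fin l → A) :
    @Structure.funMap L _ (cStruct D Q) l f x = D (Finset.image x Finset.univ) := rfl

end Struct

section RealizeLemmas
variable {M : Type} [S : L.Structure M]

theorem realize_gt (b : Finset (Fin n)) (v : Empty → M) (xs : Fin n → M) :
    (gt b).realize (Sum.elim v xs) =
      Structure.funMap (G b.card)
        (fun i => xs ((b.orderIsoOfFin rfl i : Fin n))) := by
  simp [gt, tvar, Term.realize]

theorem realize_axP (hn : ∀ m, M ⊨ axP m) (x : Fin n → M) :
    Structure.RelMap P ![Structure.funMap (G n) x] := by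
  have := hn n
  rw [Sentence.Realize, axP, BoundedFormula.realize_alls] at this
  have h2 := this x
  rw [BoundedFormula.realize_rel₁] at h2
  convert h2 using 2
  rfl

theorem realize_axSym (hs : ∀ m σ, M ⊨ axSym m σ) (σ : Equiv.Perm (Fin n)) (x : Fin n → M) :
    Structure.funMap (G n) x =
      Structure.funMap (G n) (fun i => x (σ i)) := by
  have := hs n σ
  rw [Sentence.Realize, axSym, BoundedFormula.realize_alls] at this
  have h2 := this x
  rw [BoundedFormula.realize_bdEqual] at h2
  simpa [gfull, tvar, Term.realize] using h2

theorem realize_body (e : Finset (Fin n) → Finset (Fin n) → Prop) (v : Empty → M)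
    (xs : Fin n → M) :
    (body e).Realize v xs ↔
      (Function.Injective xs ∧ ∀ b c : Finset (Fin n), e b c →
        Structure.funMap (G b.card)
            (fun i => xs ((b.orderIsoOfFin rfl i : Fin n))) =
          Structure.funMap (G c.card)
            (fun i => xs ((c.orderIsoOfFin rfl i : Fin n)))) := by
  rw [body, BoundedFormula.realize_inf]
  constructor
  · rintro ⟨h1, h2⟩
    constructor
    · intro i j hij
      by_contra hne
      have := BoundedFormula.realize_iInf.1 h1 (i, j)
      rw [if_neg hne] at this
      rw [BoundedFormula.realize_not, BoundedFormula.realize_bdEqual] at this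
      exact this (by simpa [tvar] using hij)
    · intro b c hbc
      have := BoundedFormula.realize_iInf.1 h2 (b, c)
      rw [if_pos hbc, BoundedFormula.realize_bdEqual, realize_gt, realize_gt] at this
      exact this
  · rintro ⟨hinj, heq⟩
    constructor
    · rw [BoundedFormula.realize_iInf]
      rintro ⟨i, j⟩
      by_cases hij : i = j
      · rw [if_pos hij]; exact BoundedFormula.realize_top.2 trivial
      · rw [if_neg hij, BoundedFormula.realize_not, BoundedFormula.realize_bdEqual]
        simp only [tvar, Term.realize]
        exact fun h => hij (hinj h)
    · rw [BoundedFormula.realize_iInf]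
      rintro ⟨b, c⟩
      by_cases hbc : e b c
      · rw [if_pos hbc, BoundedFormula.realize_bdEqual, realize_gt, realize_gt]
        exact heq b c hbc
      · rw [if_neg hbc]; exact BoundedFormula.realize_top.2 trivial


theorem image_equiv {M : Type} {a b : ℕ} (eqv : Fin a ≃ Fin b) (x : Fin b → M) :
    Finset.image (fun i => x (eqv i)) Finset.univ = Finset.image x Finset.univ := by
  ext m
  simp only [Finset.mem_image, Finset.mem_univ, true_and]
  exact ⟨fun ⟨i, h⟩ => ⟨eqv i, h⟩, fun ⟨i, h⟩ => ⟨eqv.symm i, by simpa using h⟩⟩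

theorem image_orderIsoOfFin {M : Type} (b : Finset (Fin n)) (xs : Fin n → M) :
    Finset.image (fun i => xs ((b.orderIsoOfFin rfl i : Fin n))) Finset.univ
      = b.image xs := by
  ext a
  simp only [Finset.mem_image, Finset.mem_univ, true_and]
  constructor
  · rintro ⟨i, rfl⟩; exact ⟨_, (b.orderIsoOfFin rfl i).2, rfl⟩
  · rintro ⟨j, hj, rfl⟩; exact ⟨(b.orderIsoOfFin rfl).symm ⟨j, hj⟩, by simp⟩

theorem exists_perm {M : Type} {m : ℕ} {x y : Fin m → M} (hx : Function.Injective x)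
    (hy : Function.Injective y)
    (him : Finset.image x Finset.univ = Finset.image y Finset.univ) :
    ∃ σ : Equiv.Perm (Fin m), y = fun i => x (σ i) := by
  have hr : Set.range y = Set.range x := by
    have h1 : (↑(Finset.image x Finset.univ) : Set M) = Set.range x := by simp
    have h2 : (↑(Finset.image y Finset.univ) : Set M) = Set.range y := by simp
    rw [← h1, ← h2, him]
  refine ⟨(Equiv.ofInjective y hy).trans ((Equiv.setCongr hr).trans
    (Equiv.ofInjective x hx).symm), ?_⟩
  funext i
  simp only [Equiv.trans_apply]
  rw [Equiv.apply_ofInjective_symm hx]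
  rfl

theorem funMap_cast {M : Type} [S : L.Structure M] {a b : ℕ} (h : a = b) (y : Fin b → M) :
    Structure.funMap (G a) (fun i => y (Fin.cast h i)) = Structure.funMap (G b) y := by
  subst h; rfl

variable {M : Type} [S : L.Structure M]

theorem funMap_eq_of_image (hs : ∀ m σ, M ⊨ axSym m σ) {m : ℕ} {x y : Fin m → M}
    (hx : Function.Injective x) (hy : Function.Injective y)
    (him : Finset.image x Finset.univ = Finset.image y Finset.univ) :
    Structure.funMap (G m) x = Structure.funMap (G m) y := by
  obtain ⟨σ, rfl⟩ := exists_perm hx hy him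
  exact realize_axSym hs σ x

noncomputable def DM (M : Type) [L.Structure M] (s : Finset M) : M :=
  Structure.funMap (G s.card) (fun i => (s.equivFin.symm i : M))

theorem enum_inj (s : Finset M) :
    Function.Injective (fun i : Fin s.card => (s.equivFin.symm i : M)) :=
  fun _ _ h => (Equiv.injective _) (Subtype.ext h)

theorem enum_image (s : Finset M) :
    Finset.image (fun i : Fin s.card => (s.equivFin.symm i : M)) Finset.univ = s := by
  ext a
  simp only [Finset.mem_image, Finset.mem_univ, true_and]
  constructor
  · rintro ⟨i, rfl⟩; exact (s.equivFin.symm i).2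
  · intro ha; exact ⟨s.equivFin ⟨a, ha⟩, by simp⟩

theorem funMap_eq_DM (hs : ∀ m σ, M ⊨ axSym m σ) {m : ℕ} (x : Fin m → M)
    (hx : Function.Injective x) :
    Structure.funMap (G m) x = DM M (Finset.image x Finset.univ) := by
  set s := Finset.image x Finset.univ with hsdef
  have hcard : s.card = m := by
    rw [hsdef, Finset.card_image_of_injective _ hx, Finset.card_univ, Fintype.card_fin]
  have step1 : Structure.funMap (G m) x =
      Structure.funMap (G m) (fun i => (s.equivFin.symm (Fin.cast hcard.symm i) : M)) := by
    apply funMap_eq_of_image hs hx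
    · exact (enum_inj s).comp fun _ _ h => by simpa using (Fin.cast_injective _ h)
    · have h1 : Finset.image (fun i : Fin m => (s.equivFin.symm (Fin.cast hcard.symm i) : M))
          Finset.univ = Finset.image (fun i : Fin s.card => (s.equivFin.symm i : M))
          Finset.univ :=
        image_equiv (finCongr hcard.symm) (fun i : Fin s.card => (s.equivFin.symm i : M))
      rw [h1, enum_image]
  rw [step1, DM]
  exact funMap_cast hcard.symm (fun i : Fin s.card => (s.equivFin.symm i : M))

end RealizeLemmas


section Theory

variable {A B : Type} (c : ℕ → Finset A → B)

/-- the theory -/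
def TT : L.Theory :=
  Set.range axP ∪ (⋃ n, Set.range (axSym n)) ∪
  {φ | ∃ (n : ℕ) (e : Finset (Fin n) → Finset (Fin n) → Prop) (k : ℕ),
    ¬ RealizesId (c k) e ∧ φ = phi e}

theorem TT_countable : (TT c).Countable := by
  have h3 : {φ : L.Sentence | ∃ (n : ℕ) (e : Finset (Fin n) → Finset (Fin n) → Prop) (k : ℕ),
      ¬ RealizesId (c k) e ∧ φ = phi e}.Countable := by
    have hsub : {φ : L.Sentence | ∃ (n : ℕ) (e : Finset (Fin n) → Finset (Fin n) → Prop) (k : ℕ),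
        ¬ RealizesId (c k) e ∧ φ = phi e} ⊆
        ⋃ n : ℕ, Set.range (fun e : Finset (Fin n) → Finset (Fin n) → Prop => phi e) := by
      rintro φ ⟨n, e, k, -, rfl⟩
      exact Set.mem_iUnion.2 ⟨n, ⟨e, rfl⟩⟩
    exact ((Set.countable_iUnion fun n => Set.countable_range _).mono hsub)
  exact ((Set.countable_range _).union
    (Set.countable_iUnion fun n => Set.countable_range _)).union h3

end Theory

theorem finiteModel (lam1 mu1 : Cardinal.{0}) (hmu1 : ℵ₀ ≤ mu1) (hml1 : mu1 ≤ lam1)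
    (c : ℕ → Finset (Quotient.out lam1) → Quotient.out mu1) (K : Finset ℕ) :
    ∃ S : L.Structure (Quotient.out lam1),
      (∀ n : ℕ, @Sentence.Realize L _ S (axP n)) ∧
      (∀ (n : ℕ) (σ : Equiv.Perm (Fin n)), @Sentence.Realize L _ S (axSym n σ)) ∧
      (∀ (n : ℕ) (e : Finset (Fin n) → Finset (Fin n) → Prop) (k : ℕ), k ∈ K →
        ¬ RealizesId (c k) e → @Sentence.Realize L _ S (phi e)) ∧
      Cardinal.mk {a : Quotient.out lam1 // @Structure.RelMap L _ S 1 P ![a]} = mu1 := by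
  classical
  obtain ⟨j⟩ : Nonempty (Quotient.out mu1 ↪ Quotient.out lam1) :=
    (Cardinal.le_def _ _).1 (by simpa using hml1)
  obtain ⟨ι⟩ : Nonempty ((Fin K.card → Quotient.out mu1) ↪ Quotient.out mu1) := by
    refine (Cardinal.le_def _ _).1 ?_
    rw [Cardinal.mk_arrow]
    simp only [Cardinal.mk_out, Cardinal.lift_id, Cardinal.mk_fin, Cardinal.lift_natCast]
    exact Cardinal.pow_le hmu1 (Cardinal.nat_lt_aleph0 _)
  set D : Finset (Quotient.out lam1) → Quotient.out lam1 :=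
    fun s => j (ι (fun i => c ((K.equivFin.symm i : ℕ)) s)) with hD
  letI SS : L.Structure (Quotient.out lam1) := cStruct D (Set.range j)
  refine ⟨SS, ?_, ?_, ?_, ?_⟩
  · intro n
    rw [Sentence.Realize, axP, BoundedFormula.realize_alls]
    intro xs
    rw [BoundedFormula.realize_rel₁]
    simp only [gfull, tvar, Term.realize, cStruct_fun, cStruct_rel, Matrix.cons_val_zero]
    exact Set.mem_range_self _
  · intro n σ
    rw [Sentence.Realize, axSym, BoundedFormula.realize_alls]
    intro xs
    rw [BoundedFormula.realize_bdEqual]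
    simp only [gfull, tvar, Term.realize, cStruct_fun]
    exact congrArg D (image_equiv σ xs).symm
  · intro n e k hkK hk
    rw [Sentence.Realize, phi, Formula.realize_not, BoundedFormula.realize_exs]
    rintro ⟨xs, hb⟩
    rw [realize_body] at hb
    obtain ⟨hinj, heq⟩ := hb
    apply hk
    refine ⟨⟨xs, hinj⟩, ?_⟩
    intro b c' hbc
    have h1 := heq b c' hbc
    simp only [cStruct_fun] at h1
    rw [image_orderIsoOfFin, image_orderIsoOfFin] at h1
    have h2 : (fun i => c ((K.equivFin.symm i : ℕ)) (b.image xs)) =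
        (fun i => c ((K.equivFin.symm i : ℕ)) (c'.image xs)) :=
      ι.injective (j.injective h1)
    have h3 := congrFun h2 (K.equivFin ⟨k, hkK⟩)
    simp only [Equiv.symm_apply_apply] at h3
    rw [Finset.map_eq_image, Finset.map_eq_image]
    exact h3
  · have hiff : ∀ a : Quotient.out lam1,
        (@Structure.RelMap L _ (cStruct D (Set.range j)) 1 P ![a] ↔ a ∈ Set.range j) :=
      fun a => (cStruct_rel D (Set.range j) ![a]).trans (by rw [Matrix.cons_val_zero])
    rw [Cardinal.mk_congr (Equiv.subtypeEquivRight hiff)]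
    rw [show {a // a ∈ Set.range j} = ↥(Set.range j) from rfl]
    rw [Cardinal.mk_range_eq j j.injective]
    exact Cardinal.mk_out mu1

end Remark14

open Remark14 FirstOrder.Language

/-- Remark after Claim 1.4: if `(λ₁,μ₁) →'_{ℵ₁} (λ₂,μ₂)` and `c_n : [λ₁]^{<ℵ₀} → μ₁`
for `n < ω`, then there is `c : [λ₂]^{<ℵ₀} → μ₂` with `ID(c) ⊆ ⋂_n ID(c_n)`. -/
theorem exists_coloring_of_arrowPrimeAleph1 (lam1 mu1 lam2 mu2 : Cardinal.{0})
    (hmu1 : ℵ₀ ≤ mu1) (hml1 : mu1 ≤ lam1) (hmu2 : ℵ₀ ≤ mu2) (hml2 : mu2 ≤ lam2)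
    (harr : ArrowPrimeAleph1 lam1 mu1 lam2 mu2)
    (c : ℕ → Finset (Quotient.out lam1) → Quotient.out mu1) :
    ∃ c' : Finset (Quotient.out lam2) → Quotient.out mu2,
      ∀ (n : ℕ) (e : Finset (Fin n) → Finset (Fin n) → Prop),
        IsIdentity e → RealizesId c' e → ∀ k : ℕ, RealizesId (c k) e := by
  classical
  -- finite satisfiability
  have hfin : ∀ T₀ : L.Theory, T₀ ⊆ TT c → T₀.Finite →
      ∃ (M : Type) (S : L.Structure M), @ModelsTheory L T₀ M S ∧ @InK L P lam1 mu1 M S := by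
    intro T₀ hsub hfin₀
    set kOf : L.Sentence → ℕ := fun φ =>
      if hφ : ∃ (n : ℕ) (e : Finset (Fin n) → Finset (Fin n) → Prop) (k : ℕ),
          ¬ RealizesId (c k) e ∧ φ = phi e
      then hφ.choose_spec.choose_spec.choose else 0 with hkOf
    have hKfin : (kOf '' T₀).Finite := hfin₀.image _
    obtain ⟨S, hax, hsym, hphi, hcard⟩ := finiteModel lam1 mu1 hmu1 hml1 c hKfin.toFinset
    refine ⟨Quotient.out lam1, S, ?_, Cardinal.mk_out lam1, hcard⟩
    intro φ hφ
    rcases hsub hφ with (⟨n, rfl⟩ | hy) | hz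
    · exact hax n
    · obtain ⟨n, σ, rfl⟩ : ∃ (n : ℕ) (σ : Equiv.Perm (Fin n)), axSym n σ = φ := by
        obtain ⟨n, hn⟩ := Set.mem_iUnion.1 hy
        obtain ⟨σ, hσ⟩ := hn
        exact ⟨n, σ, hσ⟩
      exact hsym n σ
    · have hEx : ∃ (n : ℕ) (e : Finset (Fin n) → Finset (Fin n) → Prop) (k : ℕ),
          ¬ RealizesId (c k) e ∧ φ = phi e := hz
      have hk' : kOf φ = hEx.choose_spec.choose_spec.choose := by
        rw [hkOf]; exact dif_pos hEx
      have spec := hEx.choose_spec.choose_spec.choose_spec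
      have hmem : kOf φ ∈ hKfin.toFinset := hKfin.mem_toFinset.2 ⟨φ, hφ, rfl⟩
      have h2 := hphi _ hEx.choose_spec.choose (kOf φ) hmem (hk' ▸ spec.1)
      rw [spec.2]
      exact h2
  obtain ⟨M, S, hMT, hMcard, hMP⟩ := harr L P Lcard (TT c) (TT_countable c) hfin
  letI := S
  obtain ⟨g⟩ : Nonempty (Quotient.out lam2 ≃ M) :=
    Cardinal.eq.1 ((Cardinal.mk_out lam2).trans hMcard.symm)
  obtain ⟨q⟩ : Nonempty ({a : M // Structure.RelMap P ![a]} ≃ Quotient.out mu2) :=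
    Cardinal.eq.1 (hMP.trans (Cardinal.mk_out mu2).symm)
  have hax : ∀ n : ℕ, M ⊨ axP n := fun n => hMT _ (Or.inl (Or.inl ⟨n, rfl⟩))
  have hsym : ∀ (n : ℕ) (σ : Equiv.Perm (Fin n)), M ⊨ axSym n σ := fun n σ =>
    hMT _ (Or.inl (Or.inr (Set.mem_iUnion.2 ⟨n, ⟨σ, rfl⟩⟩)))
  have hDMP : ∀ s : Finset M, Structure.RelMap P ![DM M s] := fun s => realize_axP hax _
  set gemb : Quotient.out lam2 ↪ M := g.toEmbedding with hgemb
  refine ⟨fun s => q ⟨DM M (s.map gemb), hDMP _⟩, ?_⟩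
  rintro n e hid ⟨h, hre⟩ k
  by_contra hk
  have hphi : M ⊨ phi e := hMT _ (Or.inr ⟨n, e, k, hk, rfl⟩)
  rw [Sentence.Realize, phi, Formula.realize_not, BoundedFormula.realize_exs] at hphi
  apply hphi
  have hxsinj : Function.Injective (fun i : Fin n => g (h i)) :=
    fun a b hab => h.injective (g.injective hab)
  refine ⟨fun i => g (h i), (realize_body e _ _).2 ⟨hxsinj, ?_⟩⟩
  intro b bb hbc
  have hinjb : Function.Injective
      (fun i => (fun i : Fin n => g (h i)) ((b.orderIsoOfFin rfl i : Fin n))) := by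
    intro i i' hii
    exact (b.orderIsoOfFin rfl).injective (Subtype.ext (h.injective (g.injective hii)))
  have hinjc : Function.Injective
      (fun i => (fun i : Fin n => g (h i)) ((bb.orderIsoOfFin rfl i : Fin n))) := by
    intro i i' hii
    exact (bb.orderIsoOfFin rfl).injective (Subtype.ext (h.injective (g.injective hii)))
  rw [funMap_eq_DM hsym _ hinjb, funMap_eq_DM hsym _ hinjc]
  have h7 : Finset.image (fun i => (fun i : Fin n => g (h i)) ((b.orderIsoOfFin rfl i : Fin n)))
      Finset.univ = b.image (fun i : Fin n => g (h i)) :=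
    image_orderIsoOfFin b (fun i : Fin n => g (h i))
  have h8 : Finset.image (fun i => (fun i : Fin n => g (h i)) ((bb.orderIsoOfFin rfl i : Fin n)))
      Finset.univ = bb.image (fun i : Fin n => g (h i)) :=
    image_orderIsoOfFin bb (fun i : Fin n => g (h i))
  rw [h7, h8]
  have him : ∀ cc : Finset (Fin n),
      cc.image (fun i : Fin n => g (h i)) = (cc.map h).map gemb := by
    intro cc
    rw [Finset.map_eq_image, Finset.map_eq_image, Finset.image_image]
    rfl
  rw [him b, him bb]
  have h6 := q.injective (hre b bb hbc)
  exact congrArg Subtype.val h6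
end

section
/- Let μ be an infinite cardinal and n < ω. Then the 2-identity (^n2, e*_n) belongs to ID_2(μ^{+n}, μ); that is, for every coloring c : [μ^{+n}]^2 → μ there is an injective map η ↦ α_η from ^n2 into μ^{+n} such that whenever {η1,η2} and {ν1,ν2} are 2-element subsets of ^n2 with η1 ∩ η2 = ν1 ∩ ν2, then c({α_{η1}, α_{η2}}) = c({α_{ν1}, α_{ν2}}). -/
/-!
Induction on `n`, peeling off the first coordinate: `^(n+1)2` is a copy `0⌢^n2` below a
copy `1⌢^n2`, and every pair across the two copies has meet `⟨⟩`. Given `c` on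
`κ⁺ = μ^{+(n+1)}`, put aside a set `S` of size `κ`. For each `b ∉ S`, pigeonhole (`κ` regular,
`μ < κ`) gives `κ`-many `a ∈ S` with `c {a, b}` constant, and the induction hypothesis gives a
homogeneous copy `t_b` of `^n2` among them. There are only `κ` pairs (`t_b`, colour), so by
pigeonhole again `κ⁺`-many `b` share them, and a homogeneous copy of `^n2` among those `b` sits
above `t_b`.
-/

open Cardinal

/-- The `n`-th cardinal successor `μ⁺ⁿ`. -/
noncomputable def succIter (c : Cardinal.{0}) (n : ℕ) : Cardinal.{0} :=
  Order.succ^[n] c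

/-- For sequences `η₁, η₂, ν₁, ν₂ ∈ ^n2` with `η₁ ≠ η₂` and `ν₁ ≠ ν₂`:
`η₁ ∩ η₂ = ν₁ ∩ ν₂`, i.e. the longest common initial segments coincide. -/
def SeqMeetEq {n : ℕ} (η1 η2 ν1 ν2 : Fin n → Fin 2) : Prop :=
  ∃ k : ℕ, (∀ i : Fin n, (i : ℕ) < k → η1 i = η2 i ∧ ν1 i = ν2 i ∧ η1 i = ν1 i) ∧
    (∀ i : Fin n, (i : ℕ) = k → η1 i ≠ η2 i ∧ ν1 i ≠ ν2 i)

theorem SeqMeetEq.head_ne_or_tail {n : ℕ} {η1 η2 ν1 ν2 : Fin (n + 1) → Fin 2}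
    (h : SeqMeetEq η1 η2 ν1 ν2) :
    (η1 0 ≠ η2 0 ∧ ν1 0 ≠ ν2 0) ∨
      (η2 0 = η1 0 ∧ ν1 0 = η1 0 ∧ ν2 0 = η1 0 ∧
        SeqMeetEq (Fin.tail η1) (Fin.tail η2) (Fin.tail ν1) (Fin.tail ν2)) := by
  obtain ⟨k, hlt, heq⟩ := h
  cases k with
  | zero => exact Or.inl (heq 0 rfl)
  | succ k =>
    obtain ⟨h12, h34, h13⟩ := hlt 0 k.succ_pos
    refine Or.inr ⟨h12.symm, h13.symm, (h13.trans h34).symm, k, ?_, ?_⟩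
    · exact fun i hi => hlt i.succ (Nat.succ_lt_succ hi)
    · exact fun i hi => heq i.succ (congrArg Nat.succ hi)

section Homogeneous

variable {X C : Type} {n : ℕ}

def MeetHomogeneous (c : Sym2 X → C) (α : (Fin n → Fin 2) → X) : Prop :=
  ∀ η1 η2 ν1 ν2 : Fin n → Fin 2, η1 ≠ η2 → ν1 ≠ ν2 →
    SeqMeetEq η1 η2 ν1 ν2 → c s(α η1, α η2) = c s(α ν1, α ν2)

theorem meetHomogeneous_zero (c : Sym2 X → C) (α : (Fin 0 → Fin 2) → X) :
    MeetHomogeneous c α :=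
  fun η1 η2 _ _ hne => absurd (Subsingleton.elim η1 η2) hne

theorem meetHomogeneous_map_iff {Y : Type} (c : Sym2 X → C) (f : Y → X)
    (α : (Fin n → Fin 2) → Y) :
    MeetHomogeneous (c ∘ Sym2.map f) α ↔ MeetHomogeneous c (f ∘ α) := by
  simp only [MeetHomogeneous, Function.comp_apply, Sym2.map_mk]

def starJoin (F : Fin 2 → (Fin n → Fin 2) → X) (η : Fin (n + 1) → Fin 2) : X :=
  F (η 0) (Fin.tail η)

theorem starJoin_injective {F : Fin 2 → (Fin n → Fin 2) → X}
    (hF : Function.Injective (Function.uncurry F)) : Function.Injective (starJoin F) :=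
  hF.comp (Fin.consEquiv fun _ => Fin 2).symm.injective

theorem injective_uncurry_vecCons {α : Type} {f g : α → X} (hf : Function.Injective f)
    (hg : Function.Injective g) (hfg : ∀ x y, f x ≠ g y) :
    Function.Injective (Function.uncurry ![f, g]) := by
  rintro ⟨i, x⟩ ⟨j, y⟩ h
  match i, j, h with
  | 0, 0, h => exact congrArg _ (hf h)
  | 0, 1, h => exact absurd h (hfg x y)
  | 1, 0, h => exact absurd h.symm (hfg y x)
  | 1, 1, h => exact congrArg _ (hg h)

theorem MeetHomogeneous.starJoin {c : Sym2 X → C} {F : Fin 2 → (Fin n → Fin 2) → X}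
    (hF : ∀ i, MeetHomogeneous c (F i)) {e : C} (hcross : ∀ x y, c s(F 0 x, F 1 y) = e) :
    MeetHomogeneous c (_root_.starJoin F) := by
  have cross : ∀ ρ σ : Fin (n + 1) → Fin 2, ρ 0 ≠ σ 0 →
      c s(_root_.starJoin F ρ, _root_.starJoin F σ) = e := by
    intro ρ σ h
    simp only [_root_.starJoin]
    generalize ρ 0 = i, σ 0 = j at h ⊢
    fin_cases i <;> fin_cases j
    · exact absurd rfl h
    · exact hcross _ _
    · rw [Sym2.eq_swap]; exact hcross _ _
    · exact absurd rfl h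
  intro η1 η2 ν1 ν2 hη hν hmeet
  rcases hmeet.head_ne_or_tail with ⟨hη0, hν0⟩ | ⟨h2, h3, h4, htail⟩
  · rw [cross _ _ hη0, cross _ _ hν0]
  · have tail_ne : ∀ {ρ σ : Fin (n + 1) → Fin 2}, σ 0 = ρ 0 → ρ ≠ σ →
        Fin.tail ρ ≠ Fin.tail σ := fun {ρ σ} h0 hne ht =>
      hne (by rw [← Fin.cons_self_tail ρ, ← Fin.cons_self_tail σ, h0, ht])
    simp only [_root_.starJoin, h2, h3, h4]
    exact hF _ _ _ _ _ (tail_ne h2 hη) (tail_ne (h4.trans h3.symm) hν) htail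

end Homogeneous

/-- The partition relation `κ → (^n2, e*_n)_C`. -/
def ArrowsMeetIdentity (κ : Cardinal.{0}) (C : Type) (n : ℕ) : Prop :=
  ∀ (X : Type), κ ≤ #X → ∀ c : Sym2 X → C,
    ∃ α : (Fin n → Fin 2) → X, Function.Injective α ∧ MeetHomogeneous c α

namespace ArrowsMeetIdentity

variable {κ : Cardinal.{0}} {C : Type}

theorem zero (hκ : κ ≠ 0) : ArrowsMeetIdentity κ C 0 := by
  intro X hX c
  obtain ⟨x⟩ := mk_ne_zero_iff.1 (ne_bot_of_le_ne_bot hκ hX)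
  exact ⟨fun _ => x, Function.injective_of_subsingleton _, meetHomogeneous_zero c _⟩

theorem one (hκ : 2 ≤ κ) : ArrowsMeetIdentity κ C 1 := by
  intro X hX c
  obtain ⟨x, y, hxy⟩ := two_le_iff.1 (hκ.trans hX)
  refine ⟨starJoin ![fun _ => x, fun _ => y], starJoin_injective ?_, ?_⟩
  · exact injective_uncurry_vecCons (Function.injective_of_subsingleton _)
      (Function.injective_of_subsingleton _) fun _ _ => hxy
  · exact MeetHomogeneous.starJoin (fun _ => meetHomogeneous_zero c _)
      (e := c s(x, y)) fun _ _ => rfl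

theorem succ (hκ : κ.IsRegular) (hC : #C < κ) {n : ℕ}
    (h : ArrowsMeetIdentity κ C n) : ArrowsMeetIdentity (Order.succ κ) C (n + 1) := by
  intro X hX c
  have hκ' : (Order.succ κ).IsRegular := isRegular_succ hκ.aleph0_le
  have hκX : κ < #X := (Order.lt_succ κ).trans_le hX
  have : Infinite X := infinite_iff.2 (hκ.aleph0_le.trans hκX.le)
  obtain ⟨S, hS⟩ := le_mk_iff_exists_set.1 hκX.le
  have hT : Order.succ κ ≤ #(Sᶜ : Set X) := by rwa [mk_compl_of_infinite S (hS ▸ hκX)]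
  have below : ∀ b : (Sᶜ : Set X), ∃ (t : (Fin n → Fin 2) → S) (e : C),
      Function.Injective t ∧ MeetHomogeneous c (Subtype.val ∘ t) ∧
        ∀ x, c s(t x, b) = e := by
    intro b
    obtain ⟨e, he⟩ := infinite_pigeonhole_card (fun a : S => c s(a, b)) κ hS.ge
      hκ.aleph0_le (by rwa [hκ.cof_ord])
    obtain ⟨α, hα, hαc⟩ := h _ he (c ∘ Sym2.map (Subtype.val ∘ Subtype.val))
    exact ⟨Subtype.val ∘ α, e, Subtype.val_injective.comp hα,
      (meetHomogeneous_map_iff c _ α).1 hαc, fun x => (α x).2⟩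
  choose t e ht hct hte using below
  have hcard : #(((Fin n → Fin 2) → S) × C) < (Order.succ κ).ord.cof := by
    rw [hκ'.cof_ord, mk_prod, lift_id, lift_id, ← power_def, hS]
    refine mul_lt_of_lt hκ'.aleph0_le ?_ ?_
    · exact (pow_le hκ.aleph0_le (lt_aleph0_of_finite _)).trans_lt (Order.lt_succ _)
    · exact hC.trans (Order.lt_succ _)
  obtain ⟨⟨t₀, e₀⟩, hB⟩ :=
    infinite_pigeonhole_card (fun b => (t b, e b)) _ hT hκ'.aleph0_le hcard
  obtain ⟨β, hβ, hβc⟩ := h _ ((Order.le_succ κ).trans hB)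
    (c ∘ Sym2.map (Subtype.val ∘ Subtype.val))
  have hβt : ∀ y, t (β y).1 = t₀ ∧ e (β y).1 = e₀ := fun y => Prod.ext_iff.1 (β y).2
  obtain ⟨ht₀, -⟩ := hβt default
  refine ⟨starJoin ![Subtype.val ∘ t₀, Subtype.val ∘ Subtype.val ∘ β],
    starJoin_injective ?_, ?_⟩
  · refine injective_uncurry_vecCons (Subtype.val_injective.comp ?_)
      (Subtype.val_injective.comp (Subtype.val_injective.comp hβ)) fun x y hxy => ?_
    · exact ht₀ ▸ ht _
    · exact (β y).1.2 ((congrArg (· ∈ S) hxy).mp (t₀ x).2)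
  · refine MeetHomogeneous.starJoin (Fin.forall_fin_two.2 ⟨?_, ?_⟩) (e := e₀) fun x y => ?_
    · rw [Matrix.cons_val_zero, ← ht₀]
      exact hct _
    · exact (meetHomogeneous_map_iff c _ β).1 hβc
    · obtain ⟨htβ, heβ⟩ := hβt y
      simpa only [htβ, heβ, Matrix.cons_val_zero, Matrix.cons_val_one, Function.comp_apply]
        using hte (β y).1 x

end ArrowsMeetIdentity

theorem arrowsMeetIdentity_succIter {mu : Cardinal.{0}} (hmu : ℵ₀ ≤ mu) {C : Type}
    (hC : #C ≤ mu) (n : ℕ) : ArrowsMeetIdentity (succIter mu n) C n := by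
  have succIter_succ (k : ℕ) : succIter mu (k + 1) = Order.succ (succIter mu k) :=
    Function.iterate_succ_apply' _ _ _
  obtain _ | n := n
  · exact ArrowsMeetIdentity.zero (aleph0_pos.trans_le hmu).ne'
  -- `μ` itself need not be regular, so the successor step only starts at `n = 1`.
  induction n with
  | zero => exact ArrowsMeetIdentity.one (ofNat_le_aleph0.trans (hmu.trans (Order.le_succ mu)))
  | succ n ih =>
    have hmu_lt : mu < succIter mu (n + 1) :=
      (Order.le_succ_iterate n mu).trans_lt (succIter_succ n ▸ Order.lt_succ _)
    rw [succIter_succ]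
    refine ArrowsMeetIdentity.succ ?_ (hC.trans_lt hmu_lt) ih
    exact succIter_succ n ▸ isRegular_succ (hmu.trans (Order.le_succ_iterate n mu))

/-- The inductive step in the proof of Claim t.3: the 2-identity `(^n2, e*_n)` belongs
to `ID₂(μ^{+n}, μ)`; i.e. for every pair-coloring `c : [μ^{+n}]² → μ` there are
pairwise distinct `α_η < μ^{+n}` (for `η ∈ ^n2`) such that pairs with equal meets get
equal colors. -/
theorem star_identity_mem_ID2 (mu : Cardinal.{0}) (hmu : ℵ₀ ≤ mu) (n : ℕ)
    (c : Sym2 (Quotient.out (succIter mu n)) → Quotient.out mu) :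
    ∃ α : (Fin n → Fin 2) → Quotient.out (succIter mu n),
      Function.Injective α ∧
        ∀ η1 η2 ν1 ν2 : Fin n → Fin 2, η1 ≠ η2 → ν1 ≠ ν2 →
          SeqMeetEq η1 η2 ν1 ν2 → c s(α η1, α η2) = c s(α ν1, α ν2) :=
  arrowsMeetIdentity_succIter hmu (mk_out mu).le n _ (mk_out _).ge c
end
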